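/- arXiv:2007.00717 — 6 statements merged into one kernel-verified Lean document; each statement's English description precedes it below -/
import Mathlib

section
/- Let φ > 0 and γ ≥ 2 be real numbers, let ℓ ≥ 1 be an integer, and let t ≥ 0 be a real number. Then (∑_{i=0}^{ℓ−1} 2^{−i}·φ·2^{γ·i} + t·2^{−ℓ}) / (∑_{i=0}^{ℓ−1} φ·2^{γ·i} + t) ≤ 4·2^{−ℓ}. -/
set_option maxHeartbeats 1000000 in
/-- Arithmetic core of the ancestor-sum lemma: the count-weighted average of the
diameters `2^{-i}` of a ball at level `ℓ` (with `t` own samples) and its strict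
ancestors at levels `i < ℓ` (each with `φ·2^{γ·i}` samples) is at most `4·2^{-ℓ}`. -/
theorem stmt_0 (φ γ t : ℝ) (ℓ : ℕ) (hφ : 0 < φ) (hγ : 2 ≤ γ) (hℓ : 1 ≤ ℓ) (ht : 0 ≤ t) :
    (∑ i ∈ Finset.range ℓ, (2 : ℝ) ^ (-(i : ℝ)) * φ * (2 : ℝ) ^ (γ * (i : ℝ))
        + t * (2 : ℝ) ^ (-(ℓ : ℝ))) /
      (∑ i ∈ Finset.range ℓ, φ * (2 : ℝ) ^ (γ * (i : ℝ)) + t)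
      ≤ 4 * (2 : ℝ) ^ (-(ℓ : ℝ)) := by
  have h2 : (0:ℝ) < 2 := two_pos
  set a : ℝ := (2:ℝ) ^ (-(ℓ:ℝ)) with ha
  have hapos : 0 < a := Real.rpow_pos_of_pos h2 _
  have hSpos : 0 < ∑ i ∈ Finset.range ℓ, φ * (2:ℝ) ^ (γ * (i:ℝ)) :=
    Finset.sum_pos (fun i _ => mul_pos hφ (Real.rpow_pos_of_pos h2 _))
      (Finset.nonempty_range_iff.mpr (by omega))
  have hDpos : 0 < ∑ i ∈ Finset.range ℓ, φ * (2:ℝ) ^ (γ * (i:ℝ)) + t := by linarith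
  rw [div_le_iff₀ hDpos, mul_add]
  have htpart : t * a ≤ 4 * a * t := by nlinarith
  -- single term bound: the last ancestor's count is at most the sum
  have hmem : ℓ - 1 ∈ Finset.range ℓ := Finset.mem_range.mpr (by omega)
  have hsingle : φ * (2:ℝ) ^ (γ * (((ℓ-1 : ℕ)):ℝ))
      ≤ ∑ i ∈ Finset.range ℓ, φ * (2:ℝ) ^ (γ * (i:ℝ)) :=
    Finset.single_le_sum (f := fun i : ℕ => φ * (2:ℝ) ^ (γ * (i:ℝ)))
      (fun i _ => le_of_lt (mul_pos hφ (Real.rpow_pos_of_pos h2 _))) hmem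
  have hcast : (((ℓ-1 : ℕ)):ℝ) = (ℓ:ℝ) - 1 := by
    push_cast [Nat.cast_sub hℓ]; ring
  rw [hcast] at hsingle
  -- main bound on the numerator sum
  have key : ∑ i ∈ Finset.range ℓ, (2:ℝ) ^ (-(i:ℝ)) * φ * (2:ℝ) ^ (γ * (i:ℝ))
      ≤ 4 * a * (φ * (2:ℝ) ^ (γ * ((ℓ:ℝ) - 1))) := by
    set C : ℝ := (γ - 1) * ((ℓ:ℝ) - 1) - (ℓ:ℝ) + 1 with hC
    have step : ∀ i ∈ Finset.range ℓ,
        (2:ℝ) ^ (-(i:ℝ)) * φ * (2:ℝ) ^ (γ * (i:ℝ))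
          ≤ φ * (2:ℝ) ^ C * (2:ℝ) ^ (i:ℝ) := by
      intro i hi
      have hi' : (i:ℝ) ≤ (ℓ:ℝ) - 1 := by
        have := Finset.mem_range.mp hi
        have : (i:ℝ) + 1 ≤ (ℓ:ℝ) := by exact_mod_cast this
        linarith
      have e1 : (2:ℝ) ^ (-(i:ℝ)) * φ * (2:ℝ) ^ (γ * (i:ℝ))
          = φ * (2:ℝ) ^ (γ * (i:ℝ) - (i:ℝ)) := by
        rw [sub_eq_add_neg, Real.rpow_add h2]
        ring
      have e2 : φ * (2:ℝ) ^ C * (2:ℝ) ^ (i:ℝ) = φ * (2:ℝ) ^ (C + (i:ℝ)) := by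
        rw [Real.rpow_add h2 C]; ring
      rw [e1, e2]
      apply mul_le_mul_of_nonneg_left _ hφ.le
      apply Real.rpow_le_rpow_of_exponent_le one_le_two
      nlinarith
    have hsum := Finset.sum_le_sum step
    have hgeom : ∑ i ∈ Finset.range ℓ, φ * (2:ℝ) ^ C * (2:ℝ) ^ (i:ℝ)
        = φ * (2:ℝ) ^ C * ((2:ℝ) ^ ℓ - 1) := by
      rw [← Finset.mul_sum]
      congr 1
      have : ∀ i ∈ Finset.range ℓ, (2:ℝ) ^ (i:ℝ) = (2:ℝ) ^ (i:ℕ) := fun i _ =>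
        Real.rpow_natCast 2 i
      rw [Finset.sum_congr rfl this, geom_sum_eq (by norm_num)]
      norm_num
    have hfinal : φ * (2:ℝ) ^ C * ((2:ℝ) ^ ℓ - 1)
        ≤ 4 * a * (φ * (2:ℝ) ^ (γ * ((ℓ:ℝ) - 1))) := by
      have hpow : (0:ℝ) < (2:ℝ) ^ C := Real.rpow_pos_of_pos h2 _
      have h1 : φ * (2:ℝ) ^ C * ((2:ℝ) ^ ℓ - 1) ≤ φ * (2:ℝ) ^ C * (2:ℝ) ^ ℓ := by
        have : (0:ℝ) < φ * (2:ℝ)^C := mul_pos hφ hpow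
        nlinarith
      have h2' : φ * (2:ℝ) ^ C * (2:ℝ) ^ ℓ = 4 * a * (φ * (2:ℝ) ^ (γ * ((ℓ:ℝ) - 1))) := by
        have hn : ((2:ℝ) ^ ℓ : ℝ) = (2:ℝ) ^ (ℓ:ℝ) := (Real.rpow_natCast 2 ℓ).symm
        have h4 : (2:ℝ) ^ (2:ℝ) = 4 := by
          rw [show (2:ℝ) = ((2:ℕ):ℝ) from by norm_num, Real.rpow_natCast]; norm_num
        have hexp : (2:ℝ) ^ (C + (ℓ:ℝ))
            = (2:ℝ) ^ ((2:ℝ) + -(ℓ:ℝ) + γ * ((ℓ:ℝ) - 1)) := by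
          congr 1; rw [hC]; ring
        calc φ * (2:ℝ) ^ C * (2:ℝ) ^ ℓ
            = φ * (2:ℝ) ^ (C + (ℓ:ℝ)) := by rw [hn, Real.rpow_add h2 C]; ring
          _ = φ * (2:ℝ) ^ ((2:ℝ) + -(ℓ:ℝ) + γ * ((ℓ:ℝ) - 1)) := by rw [hexp]
          _ = 4 * a * (φ * (2:ℝ) ^ (γ * ((ℓ:ℝ) - 1))) := by
              rw [Real.rpow_add h2, Real.rpow_add h2, h4, ha]; ring
      linarith
    linarith [hsum, hgeom ▸ hsum, hfinal]
  calc ∑ i ∈ Finset.range ℓ, (2:ℝ) ^ (-(i:ℝ)) * φ * (2:ℝ) ^ (γ * (i:ℝ)) + t * a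
      ≤ 4 * a * (φ * (2:ℝ) ^ (γ * ((ℓ:ℝ) - 1))) + 4 * a * t := by linarith
    _ ≤ 4 * a * (∑ i ∈ Finset.range ℓ, φ * (2:ℝ) ^ (γ * (i:ℝ))) + 4 * a * t := by
        have : (0:ℝ) < 4 * a := by linarith
        nlinarith
    _ = 4 * a * (∑ i ∈ Finset.range ℓ, φ * (2:ℝ) ^ (γ * (i:ℝ))) + 4 * a * t := rfl
end

section
/- Fix an integer d ≥ 1 and reals γ > 0, φ > 0, k > 0. Let a : ℕ → ℝ satisfy 0 ≤ a_ℓ ≤ a_{ℓ+1} and 2·a_{ℓ+1} ≤ 2^γ·a_ℓ for all ℓ ∈ ℕ. Let x : ℕ → ℝ be a feasible level-count vector, and let ℓ* be the least ℓ ∈ ℕ with φ·2^{(d+γ)(ℓ−1)} ≥ k. Then ∑_{ℓ∈ℕ} a_ℓ·x_ℓ ≤ 2^{d·ℓ*}·a_{ℓ*}. -/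
/-- LP-bound lemma: for penalties `a` that are nonnegative, nondecreasing and satisfy
`2·a_{ℓ+1} ≤ 2^γ·a_ℓ`, every feasible level-count vector `x` satisfies
`∑ a_ℓ x_ℓ ≤ 2^{d ℓ*} a_{ℓ*}` where `ℓ*` is the least level with `φ·2^{(d+γ)(ℓ-1)} ≥ k`. -/
theorem stmt_1 (d : ℕ) (hd : 1 ≤ d) (γ φ k : ℝ) (hγ : 0 < γ) (hφ : 0 < φ) (hk : 0 < k)
    (a : ℕ → ℝ)
    (ha0 : ∀ ℓ, 0 ≤ a ℓ)
    (hamono : ∀ ℓ, a ℓ ≤ a (ℓ + 1))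
    (haratio : ∀ ℓ : ℕ, 2 * a (ℓ + 1) ≤ (2 : ℝ) ^ γ * a ℓ)
    (x : ℕ → ℝ)
    (hxfin : (Function.support x).Finite)
    (hxnn : ∀ ℓ, 0 ≤ x ℓ)
    (hkraft : ∑' ℓ : ℕ, (2 : ℝ) ^ (-((d : ℝ) * (ℓ : ℝ))) * x ℓ ≤ 1)
    (hsample : ∑' ℓ : ℕ,
        φ * (2 : ℝ) ^ (γ * ((ℓ : ℝ) - 1)) * (2 : ℝ) ^ (-(d : ℝ)) * x ℓ ≤ k)
    (ℓstar : ℕ)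
    (hstar : IsLeast {ℓ : ℕ | k ≤ φ * (2 : ℝ) ^ (((d : ℝ) + γ) * ((ℓ : ℝ) - 1))} ℓstar) :
    ∑' ℓ : ℕ, a ℓ * x ℓ ≤ (2 : ℝ) ^ (d * ℓstar) * a ℓstar := by
  obtain ⟨hstar1, hstar2⟩ := hstar
  have hstar1' : k ≤ φ * (2 : ℝ) ^ (((d : ℝ) + γ) * ((ℓstar : ℝ) - 1)) := hstar1
  have hmono : Monotone a := monotone_nat_of_le_succ hamono
  have h2 : (0:ℝ) < 2 := two_pos
  set B : ℝ := (2:ℝ) ^ (d * ℓstar) * a ℓstar with hB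
  have hBnn : 0 ≤ B := mul_nonneg (pow_nonneg (by norm_num) _) (ha0 _)
  -- geometric decay above ℓstar
  have hdecay : ∀ m : ℕ, a (ℓstar + m) ≤ a ℓstar * (2:ℝ) ^ ((γ - 1) * (m:ℝ)) := by
    intro m
    induction m with
    | zero => simp
    | succ n ih =>
      have h1 : a (ℓstar + n + 1) ≤ (2:ℝ) ^ (γ - 1) * a (ℓstar + n) := by
        have hr := haratio (ℓstar + n)
        have he : (2:ℝ) ^ (γ - 1) = (2:ℝ) ^ γ / 2 := by
          rw [Real.rpow_sub h2, Real.rpow_one]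
        rw [he]; linarith
      have h2e : (0:ℝ) ≤ (2:ℝ) ^ (γ - 1) := Real.rpow_nonneg (by norm_num) _
      calc a (ℓstar + (n+1)) = a (ℓstar + n + 1) := rfl
        _ ≤ (2:ℝ) ^ (γ - 1) * a (ℓstar + n) := h1
        _ ≤ (2:ℝ) ^ (γ - 1) * (a ℓstar * (2:ℝ) ^ ((γ-1) * (n:ℝ))) :=
            mul_le_mul_of_nonneg_left ih h2e
        _ = a ℓstar * ((2:ℝ) ^ (γ - 1) * (2:ℝ) ^ ((γ-1) * (n:ℝ))) := by ring
        _ = a ℓstar * (2:ℝ) ^ ((γ-1) * ((n:ℕ)+1:ℕ)) := by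
            rw [← Real.rpow_add h2]
            congr 1
            push_cast
            ring
  -- central claim
  have claimC : ∀ ℓ : ℕ, a ℓ ≤ a ℓstar / 2 * (2:ℝ) ^ ((d:ℝ) * ((ℓstar:ℝ) - (ℓ:ℝ)))
      + a ℓstar / 2 * (2:ℝ) ^ (γ * ((ℓ:ℝ) - (ℓstar:ℝ))) := by
    intro ℓ
    rcases lt_trichotomy ℓ ℓstar with h | h | h
    · have h1 : a ℓ ≤ a ℓstar := hmono h.le
      have hd1 : (1:ℝ) ≤ (d:ℝ) := by exact_mod_cast hd
      have hl1 : (1:ℝ) ≤ (ℓstar:ℝ) - (ℓ:ℝ) := by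
        have : (ℓ:ℝ) + 1 ≤ (ℓstar:ℝ) := by exact_mod_cast h
        linarith
      have he : (1:ℝ) ≤ (d:ℝ) * ((ℓstar:ℝ) - (ℓ:ℝ)) := by nlinarith
      have h2e : (2:ℝ) ≤ (2:ℝ) ^ ((d:ℝ)*((ℓstar:ℝ)-(ℓ:ℝ))) := by
        calc (2:ℝ) = (2:ℝ) ^ (1:ℝ) := (Real.rpow_one 2).symm
          _ ≤ _ := Real.rpow_le_rpow_of_exponent_le one_le_two he
      have hpos2 : (0:ℝ) ≤ (2:ℝ) ^ (γ*((ℓ:ℝ)-(ℓstar:ℝ))) := Real.rpow_nonneg (by norm_num) _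
      nlinarith [ha0 ℓstar]
    · subst h
      rw [sub_self, mul_zero, mul_zero, Real.rpow_zero]
      linarith
    · obtain ⟨m, rfl⟩ : ∃ m, ℓ = ℓstar + m := ⟨ℓ - ℓstar, by omega⟩
      have hm : 1 ≤ m := by omega
      have h1 := hdecay m
      have hsplit : (2:ℝ) ^ ((γ-1) * (m:ℝ)) = (2:ℝ) ^ (γ * (m:ℝ)) * (2:ℝ) ^ (-(m:ℝ)) := by
        rw [← Real.rpow_add h2]; congr 1; ring
      have hhalf : (2:ℝ) ^ (-(m:ℝ)) ≤ 1/2 := by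
        have : (-(m:ℝ)) ≤ -1 := by
          have : (1:ℝ) ≤ (m:ℝ) := by exact_mod_cast hm
          linarith
        calc (2:ℝ) ^ (-(m:ℝ)) ≤ (2:ℝ) ^ (-1:ℝ) :=
              Real.rpow_le_rpow_of_exponent_le one_le_two this
          _ = 1/2 := by
              rw [Real.rpow_neg_one]; norm_num
      have hg : (0:ℝ) ≤ (2:ℝ) ^ (γ * (m:ℝ)) := Real.rpow_nonneg (by norm_num) _
      have hpos1 : (0:ℝ) ≤ a ℓstar / 2 * (2:ℝ) ^ ((d:ℝ) * ((ℓstar:ℝ) - ((ℓstar+m:ℕ):ℝ))) :=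
        mul_nonneg (by linarith [ha0 ℓstar]) (Real.rpow_nonneg (by norm_num) _)
      rw [show ((ℓstar+m:ℕ):ℝ) - (ℓstar:ℝ) = (m:ℝ) from by push_cast; ring]
      rw [hsplit] at h1
      have h3 : a ℓstar * ((2:ℝ)^(γ*(m:ℝ)) * (2:ℝ)^(-(m:ℝ)))
          ≤ a ℓstar * ((2:ℝ)^(γ*(m:ℝ)) * (1/2)) :=
        mul_le_mul_of_nonneg_left (mul_le_mul_of_nonneg_left hhalf hg) (ha0 ℓstar)
      linarith
  -- coefficient inequality
  have hcoef : ∀ ℓ : ℕ, a ℓ ≤ B/2 * (2:ℝ)^(-((d:ℝ)*(ℓ:ℝ)))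
      + B/(2*k) * (φ * (2:ℝ)^(γ*((ℓ:ℝ)-1)) * (2:ℝ)^(-(d:ℝ))) := by
    intro ℓ
    have hA : B/2 * (2:ℝ)^(-((d:ℝ)*(ℓ:ℝ))) = a ℓstar/2 * (2:ℝ)^((d:ℝ)*((ℓstar:ℝ)-(ℓ:ℝ))) := by
      rw [hB, ← Real.rpow_natCast 2 (d*ℓstar)]
      rw [show ((2:ℝ)^(((d*ℓstar:ℕ)):ℝ) * a ℓstar / 2 * (2:ℝ)^(-((d:ℝ)*(ℓ:ℝ))) : ℝ)
          = a ℓstar/2 * ((2:ℝ)^(((d*ℓstar:ℕ)):ℝ) * (2:ℝ)^(-((d:ℝ)*(ℓ:ℝ)))) from by ring]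
      rw [← Real.rpow_add h2]
      congr 1
      push_cast
      ring
    have hBineq : a ℓstar/2 * (2:ℝ)^(γ*((ℓ:ℝ)-(ℓstar:ℝ)))
        ≤ B/(2*k) * (φ * (2:ℝ)^(γ*((ℓ:ℝ)-1)) * (2:ℝ)^(-(d:ℝ))) := by
      rw [div_mul_eq_mul_div B (2*k), le_div_iff₀ (by positivity : (0:ℝ) < 2*k)]
      have hY : (0:ℝ) ≤ a ℓstar/2 * (2:ℝ)^(γ*((ℓ:ℝ)-(ℓstar:ℝ))) :=
        mul_nonneg (by linarith [ha0 ℓstar]) (Real.rpow_nonneg (by norm_num) _)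
      calc a ℓstar/2 * (2:ℝ)^(γ*((ℓ:ℝ)-(ℓstar:ℝ))) * (2*k)
          ≤ a ℓstar/2 * (2:ℝ)^(γ*((ℓ:ℝ)-(ℓstar:ℝ))) * (2*(φ * (2:ℝ)^(((d:ℝ)+γ)*((ℓstar:ℝ)-1)))) := by
            apply mul_le_mul_of_nonneg_left _ hY
            linarith
        _ = B * (φ * (2:ℝ)^(γ*((ℓ:ℝ)-1)) * (2:ℝ)^(-(d:ℝ))) := by
            rw [hB, ← Real.rpow_natCast 2 (d*ℓstar)]
            rw [show a ℓstar/2 * (2:ℝ)^(γ*((ℓ:ℝ)-(ℓstar:ℝ)))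
                * (2*(φ * (2:ℝ)^(((d:ℝ)+γ)*((ℓstar:ℝ)-1))))
                = a ℓstar * φ * ((2:ℝ)^(γ*((ℓ:ℝ)-(ℓstar:ℝ))) * (2:ℝ)^(((d:ℝ)+γ)*((ℓstar:ℝ)-1)))
                from by ring]
            rw [show (2:ℝ)^(((d*ℓstar:ℕ)):ℝ) * a ℓstar * (φ * (2:ℝ)^(γ*((ℓ:ℝ)-1)) * (2:ℝ)^(-(d:ℝ)))
                = a ℓstar * φ * ((2:ℝ)^(((d*ℓstar:ℕ)):ℝ) * (2:ℝ)^(γ*((ℓ:ℝ)-1)) * (2:ℝ)^(-(d:ℝ)))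
                from by ring]
            congr 1
            rw [← Real.rpow_add h2, ← Real.rpow_add h2, ← Real.rpow_add h2]
            congr 1
            push_cast
            ring
    calc a ℓ ≤ a ℓstar / 2 * (2:ℝ) ^ ((d:ℝ) * ((ℓstar:ℝ) - (ℓ:ℝ)))
        + a ℓstar / 2 * (2:ℝ) ^ (γ * ((ℓ:ℝ) - (ℓstar:ℝ))) := claimC ℓ
      _ ≤ B/2 * (2:ℝ)^(-((d:ℝ)*(ℓ:ℝ)))
        + B/(2*k) * (φ * (2:ℝ)^(γ*((ℓ:ℝ)-1)) * (2:ℝ)^(-(d:ℝ))) := by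
          rw [hA]; linarith
  -- pointwise key
  have key : ∀ ℓ : ℕ, a ℓ * x ℓ ≤ B/2 * ((2:ℝ)^(-((d:ℝ)*(ℓ:ℝ))) * x ℓ)
      + B/(2*k) * (φ * (2:ℝ)^(γ*((ℓ:ℝ)-1)) * (2:ℝ)^(-(d:ℝ)) * x ℓ) := by
    intro ℓ
    have h1 := mul_le_mul_of_nonneg_right (hcoef ℓ) (hxnn ℓ)
    calc a ℓ * x ℓ ≤ (B/2 * (2:ℝ)^(-((d:ℝ)*(ℓ:ℝ)))
        + B/(2*k) * (φ * (2:ℝ)^(γ*((ℓ:ℝ)-1)) * (2:ℝ)^(-(d:ℝ)))) * x ℓ := h1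
      _ = _ := by ring
  -- summability
  have hsummable : ∀ c : ℕ → ℝ, Summable (fun ℓ => c ℓ * x ℓ) := by
    intro c
    apply summable_of_ne_finset_zero (s := hxfin.toFinset)
    intro b hb
    have hxb : x b = 0 := by
      by_contra hne
      exact hb (hxfin.mem_toFinset.mpr hne)
    simp [hxb]
  have hs1 : Summable (fun ℓ : ℕ => (2:ℝ)^(-((d:ℝ)*(ℓ:ℝ))) * x ℓ) := hsummable _
  have hs2 : Summable (fun ℓ : ℕ => φ * (2:ℝ)^(γ*((ℓ:ℝ)-1)) * (2:ℝ)^(-(d:ℝ)) * x ℓ) := hsummable _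
  have hsa : Summable (fun ℓ : ℕ => a ℓ * x ℓ) := hsummable _
  have hBk : (0:ℝ) ≤ B/(2*k) := by positivity
  calc ∑' ℓ : ℕ, a ℓ * x ℓ
      ≤ ∑' ℓ : ℕ, (B/2 * ((2:ℝ)^(-((d:ℝ)*(ℓ:ℝ))) * x ℓ)
        + B/(2*k) * (φ * (2:ℝ)^(γ*((ℓ:ℝ)-1)) * (2:ℝ)^(-(d:ℝ)) * x ℓ)) :=
        Summable.tsum_le_tsum key hsa ((hs1.mul_left _).add (hs2.mul_left _))
    _ = B/2 * (∑' ℓ : ℕ, (2:ℝ)^(-((d:ℝ)*(ℓ:ℝ))) * x ℓ)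
        + B/(2*k) * (∑' ℓ : ℕ, φ * (2:ℝ)^(γ*((ℓ:ℝ)-1)) * (2:ℝ)^(-(d:ℝ)) * x ℓ) := by
        rw [Summable.tsum_add (hs1.mul_left _) (hs2.mul_left _), tsum_mul_left, tsum_mul_left]
    _ ≤ B/2 * 1 + B/(2*k) * k := by
        have hB2 : (0:ℝ) ≤ B/2 := by linarith
        exact add_le_add (mul_le_mul_of_nonneg_left hkraft hB2)
          (mul_le_mul_of_nonneg_left hsample hBk)
    _ = B := by field_simp; ring
end

section
/- Fix an integer d ≥ 1 and reals γ > 0, φ > 0, k > 0, and let ℓ* be the least ℓ ∈ ℕ with φ·2^{(d+γ)(ℓ−1)} ≥ k. Let a : ℕ → ℝ satisfy 0 ≤ a_ℓ ≤ a_{ℓ+1} for all ℓ ∈ ℕ, and 2·a_{ℓ+1} ≤ 2^γ·a_ℓ for all ℓ ≥ ℓ* (the ratio condition is only required from level ℓ* onward). Then for every feasible level-count vector x : ℕ → ℝ, ∑_{ℓ∈ℕ} a_ℓ·x_ℓ ≤ 2^{d·ℓ*}·a_{ℓ*}. -/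
/-!
LP duality. With `c = a_{ℓ*} / 2`, every coefficient is dominated by the dual combination
`a_ℓ ≤ c·2^{dℓ*}·2^{-dℓ} + (c·2^{dℓ*}/k)·n₊(ℓ-1)·2^{-d}`: below `ℓ*` the Kraft term alone
suffices by monotonicity, and from `ℓ*` on the ratio condition makes `a` grow at most like
`2^{γ(ℓ-ℓ*)}`, which the sample term absorbs thanks to the threshold defining `ℓ*`. Pairing
with a feasible `x` bounds the objective by `c·2^{dℓ*} + c·2^{dℓ*} = 2^{dℓ*}·a_{ℓ*}`.
-/

open Real

theorem tsum_mul_le_of_le_add {ι : Type*} {f u v x : ι → ℝ} {α β U V : ℝ}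
    (hx : x.support.Finite) (hx0 : ∀ i, 0 ≤ x i) (hα : 0 ≤ α) (hβ : 0 ≤ β)
    (hf : ∀ i, f i ≤ α * u i + β * v i)
    (hU : ∑' i, u i * x i ≤ U) (hV : ∑' i, v i * x i ≤ V) :
    ∑' i, f i * x i ≤ α * U + β * V := by
  have hsumm (g : ι → ℝ) : Summable fun i ↦ g i * x i :=
    summable_of_hasFiniteSupport (hx.subset (Function.support_mul_subset_right _ _))
  calc ∑' i, f i * x i ≤ ∑' i, (α * (u i * x i) + β * (v i * x i)) := by
        refine (hsumm f).tsum_le_tsum (fun i ↦ ?_)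
          (((hsumm u).mul_left α).add ((hsumm v).mul_left β))
        nlinarith [hf i, hx0 i]
    _ = α * ∑' i, u i * x i + β * ∑' i, v i * x i := by
        rw [((hsumm u).mul_left α).tsum_add ((hsumm v).mul_left β), tsum_mul_left, tsum_mul_left]
    _ ≤ α * U + β * V := by gcongr

theorem le_div_two_pow_mul_of_two_mul_succ_le {a : ℕ → ℝ} {r : ℝ} {N : ℕ} (hr : 0 ≤ r)
    (h : ∀ n, N ≤ n → 2 * a (n + 1) ≤ r * a n) (m : ℕ) :
    a (N + m) ≤ (r / 2) ^ m * a N := by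
  induction m with
  | zero => simp
  | succ m ih =>
    calc a (N + (m + 1)) ≤ r / 2 * a (N + m) := by
          rw [← add_assoc]; linarith [h (N + m) (Nat.le_add_right N m)]
      _ ≤ r / 2 * ((r / 2) ^ m * a N) := by gcongr
      _ = (r / 2) ^ (m + 1) * a N := by ring

theorem le_half_mul_two_rpow_add {a : ℕ → ℝ} {L : ℕ} {d γ : ℝ} (ha0 : ∀ n, 0 ≤ a n)
    (hmono : Monotone a) (hd : 1 ≤ d) (hratio : ∀ n, L ≤ n → 2 * a (n + 1) ≤ 2 ^ γ * a n)
    (ℓ : ℕ) :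
    a ℓ ≤ a L / 2 * (2 ^ (d * ((L : ℝ) - ℓ)) + 2 ^ (γ * ((ℓ : ℝ) - L))) := by
  have haL := ha0 L
  rcases lt_trichotomy ℓ L with hlt | rfl | hgt
  · have hexp : 1 ≤ d * ((L : ℝ) - ℓ) := by
      have : (ℓ : ℝ) + 1 ≤ L := by exact_mod_cast hlt
      exact one_le_mul_of_one_le_of_one_le hd (by linarith)
    have h2 : (2 : ℝ) ≤ 2 ^ (d * ((L : ℝ) - ℓ)) := by
      simpa using rpow_le_rpow_of_exponent_le one_le_two hexp
    have hγterm : 0 ≤ a L / 2 * 2 ^ (γ * ((ℓ : ℝ) - L)) := by positivity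
    nlinarith [hmono hlt.le]
  · simp only [sub_self, mul_zero, rpow_zero]
    linarith
  · obtain ⟨m, rfl⟩ := Nat.exists_eq_add_of_lt hgt
    have hgrowth := le_div_two_pow_mul_of_two_mul_succ_le (by positivity) hratio (m + 1)
    rw [← add_assoc] at hgrowth
    have hpow : (2 : ℝ) ^ (γ * (((L + m + 1 : ℕ) : ℝ) - L)) = (2 ^ γ) ^ (m + 1) := by
      rw [← rpow_mul_natCast zero_le_two]
      push_cast
      ring_nf
    have hhalf : ((2 : ℝ) ^ γ / 2) ^ (m + 1) ≤ (2 ^ γ) ^ (m + 1) / 2 := by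
      rw [div_pow]
      gcongr
      calc (2 : ℝ) = 2 ^ 1 := (pow_one 2).symm
        _ ≤ 2 ^ (m + 1) := pow_le_pow_right₀ one_le_two (by omega)
    have hdterm : 0 ≤ a L / 2 * 2 ^ (d * ((L : ℝ) - ↑(L + m + 1))) := by positivity
    rw [hpow]
    nlinarith [mul_le_mul_of_nonneg_right hhalf haL]

theorem two_rpow_le_of_le_threshold {d γ φ k L : ℝ} (hk : 0 < k)
    (hL : k ≤ φ * 2 ^ ((d + γ) * (L - 1))) (ℓ : ℝ) :
    (2 : ℝ) ^ (γ * (ℓ - L)) ≤ 2 ^ (d * L) / k * (φ * 2 ^ (γ * (ℓ - 1)) * 2 ^ (-d)) := by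
  have hexp : (2 : ℝ) ^ (d * L) * 2 ^ (γ * (ℓ - 1)) * 2 ^ (-d)
      = 2 ^ ((d + γ) * (L - 1)) * 2 ^ (γ * (ℓ - L)) := by
    simp only [← rpow_add two_pos]
    ring_nf
  rw [div_mul_eq_mul_div, le_div_iff₀ hk]
  calc (2 : ℝ) ^ (γ * (ℓ - L)) * k ≤ 2 ^ (γ * (ℓ - L)) * (φ * 2 ^ ((d + γ) * (L - 1))) := by
        gcongr
    _ = 2 ^ (d * L) * (φ * 2 ^ (γ * (ℓ - 1)) * 2 ^ (-d)) := by
        linear_combination φ * hexp.symm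

theorem stmt_2_general (d : ℕ) (hd : 1 ≤ d) (γ φ k : ℝ) (hk : 0 < k)
    (ℓstar : ℕ)
    (hstar : IsLeast {ℓ : ℕ | k ≤ φ * (2 : ℝ) ^ (((d : ℝ) + γ) * ((ℓ : ℝ) - 1))} ℓstar)
    (a : ℕ → ℝ)
    (ha0 : ∀ ℓ, 0 ≤ a ℓ)
    (hamono : ∀ ℓ, a ℓ ≤ a (ℓ + 1))
    (haratio : ∀ ℓ : ℕ, ℓstar ≤ ℓ → 2 * a (ℓ + 1) ≤ (2 : ℝ) ^ γ * a ℓ)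
    (x : ℕ → ℝ)
    (hxfin : (Function.support x).Finite)
    (hxnn : ∀ ℓ, 0 ≤ x ℓ)
    (hkraft : ∑' ℓ : ℕ, (2 : ℝ) ^ (-((d : ℝ) * (ℓ : ℝ))) * x ℓ ≤ 1)
    (hsample : ∑' ℓ : ℕ,
        φ * (2 : ℝ) ^ (γ * ((ℓ : ℝ) - 1)) * (2 : ℝ) ^ (-(d : ℝ)) * x ℓ ≤ k) :
    ∑' ℓ : ℕ, a ℓ * x ℓ ≤ (2 : ℝ) ^ (d * ℓstar) * a ℓstar := by
  set c := a ℓstar / 2 * (2 : ℝ) ^ ((d : ℝ) * ℓstar) with hc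
  have hc0 : 0 ≤ c := by have := ha0 ℓstar; positivity
  have hdual (ℓ : ℕ) : a ℓ ≤ c * 2 ^ (-((d : ℝ) * ℓ))
      + c / k * (φ * (2 : ℝ) ^ (γ * ((ℓ : ℝ) - 1)) * (2 : ℝ) ^ (-(d : ℝ))) := by
    have hkraft_term :
        c * 2 ^ (-((d : ℝ) * ℓ)) = a ℓstar / 2 * 2 ^ ((d : ℝ) * ((ℓstar : ℝ) - ℓ)) := by
      rw [hc, mul_assoc, ← rpow_add two_pos]
      ring_nf
    have hsample_term := mul_le_mul_of_nonneg_left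
      (two_rpow_le_of_le_threshold hk hstar.1 (ℓ : ℝ)) (div_nonneg (ha0 ℓstar) zero_le_two)
    calc a ℓ ≤ _ := le_half_mul_two_rpow_add ha0 (monotone_nat_of_le_succ hamono)
          (Nat.one_le_cast.mpr hd) haratio ℓ
      _ ≤ _ := by
          rw [hkraft_term, mul_add]
          exact add_le_add_right (hsample_term.trans_eq (by rw [hc]; ring)) _
  calc ∑' ℓ : ℕ, a ℓ * x ℓ ≤ c * 1 + c / k * k :=
        tsum_mul_le_of_le_add hxfin hxnn hc0 (by positivity) hdual hkraft hsample
    _ = (2 : ℝ) ^ (d * ℓstar) * a ℓstar := by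
        rw [hc, ← rpow_natCast]
        field_simp
        push_cast
        ring

/-- Refined LP-bound lemma: the ratio condition `2·a_{ℓ+1} ≤ 2^γ·a_ℓ` is only
required for levels `ℓ ≥ ℓ*`. -/
theorem stmt_2 (d : ℕ) (hd : 1 ≤ d) (γ φ k : ℝ) (hγ : 0 < γ) (hφ : 0 < φ) (hk : 0 < k)
    (ℓstar : ℕ)
    (hstar : IsLeast {ℓ : ℕ | k ≤ φ * (2 : ℝ) ^ (((d : ℝ) + γ) * ((ℓ : ℝ) - 1))} ℓstar)
    (a : ℕ → ℝ)
    (ha0 : ∀ ℓ, 0 ≤ a ℓ)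
    (hamono : ∀ ℓ, a ℓ ≤ a (ℓ + 1))
    (haratio : ∀ ℓ : ℕ, ℓstar ≤ ℓ → 2 * a (ℓ + 1) ≤ (2 : ℝ) ^ γ * a ℓ)
    (x : ℕ → ℝ)
    (hxfin : (Function.support x).Finite)
    (hxnn : ∀ ℓ, 0 ≤ x ℓ)
    (hkraft : ∑' ℓ : ℕ, (2 : ℝ) ^ (-((d : ℝ) * (ℓ : ℝ))) * x ℓ ≤ 1)
    (hsample : ∑' ℓ : ℕ,
        φ * (2 : ℝ) ^ (γ * ((ℓ : ℝ) - 1)) * (2 : ℝ) ^ (-(d : ℝ)) * x ℓ ≤ k) :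
    ∑' ℓ : ℕ, a ℓ * x ℓ ≤ (2 : ℝ) ^ (d * ℓstar) * a ℓstar :=
  stmt_2_general d hd γ φ k hk ℓstar hstar a ha0 hamono haratio x hxfin hxnn hkraft hsample
end

section
/- Fix an integer d ≥ 1 and reals γ ≥ 1 and k ≥ φ > 0. Then every feasible level-count vector x : ℕ → ℝ satisfies ∑_{ℓ∈ℕ} x_ℓ ≤ 4^{d}·(k/φ)^{d/(d+γ)}. -/
/-- Worst-case partition size: every feasible level-count vector has total count
at most `4^d (k/φ)^{d/(d+γ)}` (requires `γ ≥ 1`). -/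
theorem stmt_6 (d : ℕ) (hd : 1 ≤ d) (γ φ k : ℝ) (hγ : 1 ≤ γ) (hφ : 0 < φ) (hkφ : φ ≤ k)
    (x : ℕ → ℝ)
    (hxfin : (Function.support x).Finite)
    (hxnn : ∀ ℓ, 0 ≤ x ℓ)
    (hkraft : ∑' ℓ : ℕ, (2 : ℝ) ^ (-((d : ℝ) * (ℓ : ℝ))) * x ℓ ≤ 1)
    (hsample : ∑' ℓ : ℕ,
        φ * (2 : ℝ) ^ (γ * ((ℓ : ℝ) - 1)) * (2 : ℝ) ^ (-(d : ℝ)) * x ℓ ≤ k) :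
    ∑' ℓ : ℕ, x ℓ ≤ (4 : ℝ) ^ d * (k / φ) ^ ((d : ℝ) / ((d : ℝ) + γ)) := by
  classical
  have hγ0 : (0:ℝ) < γ := lt_of_lt_of_le one_pos hγ
  have hd1 : (1:ℝ) ≤ (d:ℝ) := by exact_mod_cast hd
  have hdiv1 : (1:ℝ) ≤ k / φ := (one_le_div hφ).2 hkφ
  have hdivpos : (0:ℝ) < k / φ := lt_of_lt_of_le one_pos hdiv1
  set t := Real.logb 2 (k / φ) with ht_def
  have ht0 : 0 ≤ t := Real.logb_nonneg one_lt_two hdiv1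
  have h2t : (2:ℝ) ^ t = k / φ := Real.rpow_logb (by norm_num) (by norm_num) hdivpos
  have hdγ : (0:ℝ) < (d:ℝ) + γ := by positivity
  set L : ℕ := ⌈t / ((d:ℝ) + γ)⌉₊ with hL_def
  have hL2 : t / ((d:ℝ)+γ) ≤ (L:ℝ) := Nat.le_ceil _
  have hL1 : (L:ℝ) ≤ t / ((d:ℝ)+γ) + 1 :=
    le_of_lt (Nat.ceil_lt_add_one (by positivity))
  set A : ℝ := (2:ℝ) ^ ((d:ℝ) * (L:ℝ)) with hA_def
  set B : ℝ := (2:ℝ) ^ (d:ℝ) / (φ * (2:ℝ) ^ (γ * (L:ℝ))) with hB_def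
  have hApos : 0 < A := Real.rpow_pos_of_pos two_pos _
  have hBpos : 0 < B :=
    div_pos (Real.rpow_pos_of_pos two_pos _)
      (mul_pos hφ (Real.rpow_pos_of_pos two_pos _))
  set r : ℝ := (k / φ) ^ ((d:ℝ) / ((d:ℝ) + γ)) with hr_def
  have hrpos : 0 < r := Real.rpow_pos_of_pos hdivpos _
  -- pointwise bound
  have hpt : ∀ ℓ : ℕ, x ℓ ≤ A * ((2:ℝ) ^ (-((d:ℝ)*(ℓ:ℝ))) * x ℓ)
      + B * (φ * (2:ℝ) ^ (γ * ((ℓ:ℝ)-1)) * (2:ℝ) ^ (-(d:ℝ)) * x ℓ) := by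
    intro ℓ
    rcases le_or_gt ℓ L with h | h
    · have h1 : (1:ℝ) ≤ A * (2:ℝ) ^ (-((d:ℝ)*(ℓ:ℝ))) := by
        rw [hA_def, ← Real.rpow_add two_pos]
        calc (1:ℝ) = (2:ℝ) ^ (0:ℝ) := (Real.rpow_zero 2).symm
        _ ≤ _ := by
            apply Real.rpow_le_rpow_of_exponent_le one_le_two
            have hc : (ℓ:ℝ) ≤ (L:ℝ) := by exact_mod_cast h
            nlinarith [hc, hd1]
      have h2 : 0 ≤ B * (φ * (2:ℝ) ^ (γ * ((ℓ:ℝ)-1)) * (2:ℝ) ^ (-(d:ℝ)) * x ℓ) := by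
        have := hxnn ℓ
        positivity
      have := le_mul_of_one_le_left (hxnn ℓ) h1
      rw [mul_assoc] at this
      linarith
    · have hkey : B * (φ * (2:ℝ) ^ (γ * ((ℓ:ℝ)-1)) * (2:ℝ) ^ (-(d:ℝ)))
          = (2:ℝ) ^ (γ * ((ℓ:ℝ)-1) - γ * (L:ℝ)) := by
        rw [hB_def, Real.rpow_sub two_pos, Real.rpow_neg (le_of_lt two_pos)]
        have h1 : ((2:ℝ) ^ (d:ℝ)) ≠ 0 := ne_of_gt (Real.rpow_pos_of_pos two_pos _)
        have h2 : ((2:ℝ) ^ (γ*(L:ℝ))) ≠ 0 := ne_of_gt (Real.rpow_pos_of_pos two_pos _)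
        field_simp
      have h1 : (1:ℝ) ≤ B * (φ * (2:ℝ) ^ (γ * ((ℓ:ℝ)-1)) * (2:ℝ) ^ (-(d:ℝ))) := by
        rw [hkey]
        calc (1:ℝ) = (2:ℝ) ^ (0:ℝ) := (Real.rpow_zero 2).symm
        _ ≤ _ := by
            apply Real.rpow_le_rpow_of_exponent_le one_le_two
            have hc : (L:ℝ) + 1 ≤ (ℓ:ℝ) := by exact_mod_cast h
            nlinarith [hc, hγ0]
      have h2 : 0 ≤ A * ((2:ℝ) ^ (-((d:ℝ)*(ℓ:ℝ))) * x ℓ) := by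
        have := hxnn ℓ
        positivity
      have := le_mul_of_one_le_left (hxnn ℓ) h1
      rw [mul_assoc] at this
      linarith
  -- summability
  have hzero : ∀ i ∉ hxfin.toFinset, x i = 0 := by
    intro i hi
    by_contra hxi
    exact hi (hxfin.mem_toFinset.2 hxi)
  have hsx : Summable x := summable_of_ne_finset_zero hzero
  have hf1 : Summable (fun ℓ : ℕ => (2:ℝ) ^ (-((d:ℝ)*(ℓ:ℝ))) * x ℓ) := by
    apply summable_of_ne_finset_zero (s := hxfin.toFinset)
    intro i hi; rw [hzero i hi, mul_zero]
  have hf2 : Summable (fun ℓ : ℕ =>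
      φ * (2:ℝ) ^ (γ * ((ℓ:ℝ)-1)) * (2:ℝ) ^ (-(d:ℝ)) * x ℓ) := by
    apply summable_of_ne_finset_zero (s := hxfin.toFinset)
    intro i hi; rw [hzero i hi, mul_zero]
  -- sum the bound
  have hsum : ∑' ℓ : ℕ, x ℓ ≤ A * 1 + B * k := by
    calc ∑' ℓ : ℕ, x ℓ
        ≤ ∑' ℓ : ℕ, (A * ((2:ℝ) ^ (-((d:ℝ)*(ℓ:ℝ))) * x ℓ)
            + B * (φ * (2:ℝ) ^ (γ * ((ℓ:ℝ)-1)) * (2:ℝ) ^ (-(d:ℝ)) * x ℓ)) :=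
          Summable.tsum_le_tsum hpt hsx ((hf1.mul_left A).add (hf2.mul_left B))
      _ = A * (∑' ℓ : ℕ, (2:ℝ) ^ (-((d:ℝ)*(ℓ:ℝ))) * x ℓ)
            + B * (∑' ℓ : ℕ, φ * (2:ℝ) ^ (γ * ((ℓ:ℝ)-1)) * (2:ℝ) ^ (-(d:ℝ)) * x ℓ) := by
          rw [Summable.tsum_add (hf1.mul_left A) (hf2.mul_left B), tsum_mul_left, tsum_mul_left]
      _ ≤ A * 1 + B * k :=
          add_le_add (mul_le_mul_of_nonneg_left hkraft hApos.le)
            (mul_le_mul_of_nonneg_left hsample hBpos.le)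
  -- arithmetic: A ≤ 2^d * r
  have hr_eq : ∀ s : ℝ, (2:ℝ) ^ (t * s) = (k/φ) ^ s := by
    intro s
    rw [Real.rpow_mul (le_of_lt two_pos), h2t]
  have hA_le : A ≤ (2:ℝ) ^ (d:ℝ) * r := by
    have h1 : A ≤ (2:ℝ) ^ (t * ((d:ℝ)/((d:ℝ)+γ)) + (d:ℝ)) := by
      apply Real.rpow_le_rpow_of_exponent_le one_le_two
      have h2 : (d:ℝ) * (L:ℝ) ≤ (d:ℝ) * (t/((d:ℝ)+γ) + 1) := by
        apply mul_le_mul_of_nonneg_left hL1 (by positivity)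
      have h3 : (d:ℝ) * (t/((d:ℝ)+γ) + 1) = t * ((d:ℝ)/((d:ℝ)+γ)) + (d:ℝ) := by
        field_simp
      linarith
    rw [Real.rpow_add two_pos, hr_eq] at h1
    calc A ≤ (k/φ) ^ ((d:ℝ)/((d:ℝ)+γ)) * (2:ℝ)^(d:ℝ) := h1
    _ = (2:ℝ)^(d:ℝ) * r := by rw [hr_def]; ring
  have hB_le : B * k ≤ (2:ℝ) ^ (d:ℝ) * r := by
    have hBk : B * k = (2:ℝ) ^ ((d:ℝ) + (t - γ * (L:ℝ))) := by
      rw [Real.rpow_add two_pos, Real.rpow_sub two_pos, h2t, hB_def]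
      have h2 : ((2:ℝ) ^ (γ*(L:ℝ))) ≠ 0 := ne_of_gt (Real.rpow_pos_of_pos two_pos _)
      field_simp
    rw [hBk]
    have h1 : (d:ℝ) + (t - γ * (L:ℝ)) ≤ (d:ℝ) + t * ((d:ℝ)/((d:ℝ)+γ)) := by
      have h2 : γ * (t/((d:ℝ)+γ)) ≤ γ * (L:ℝ) :=
        mul_le_mul_of_nonneg_left hL2 hγ0.le
      have h3 : t - γ * (t/((d:ℝ)+γ)) = t * ((d:ℝ)/((d:ℝ)+γ)) := by
        field_simp; ring
      linarith
    calc (2:ℝ) ^ ((d:ℝ) + (t - γ * (L:ℝ)))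
        ≤ (2:ℝ) ^ ((d:ℝ) + t * ((d:ℝ)/((d:ℝ)+γ))) :=
          Real.rpow_le_rpow_of_exponent_le one_le_two h1
      _ = (2:ℝ)^(d:ℝ) * r := by rw [Real.rpow_add two_pos, hr_eq, hr_def]
  -- conclude
  have h2d : (2:ℝ) ^ (d:ℝ) = (2:ℝ) ^ d := by
    rw [Real.rpow_natCast]
  have hfin : (2:ℝ)^(d:ℝ) * r + (2:ℝ)^(d:ℝ) * r ≤ (4:ℝ) ^ d * r := by
    have h4 : (4:ℝ) ^ d = (2:ℝ)^d * (2:ℝ)^d := by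
      rw [← mul_pow]; norm_num
    have h2le : (2:ℝ) ≤ (2:ℝ)^d := by
      calc (2:ℝ) = (2:ℝ)^1 := (pow_one 2).symm
      _ ≤ (2:ℝ)^d := pow_le_pow_right₀ one_le_two hd
    rw [h2d, h4]
    calc (2:ℝ)^d * r + (2:ℝ)^d * r = (2 * (2:ℝ)^d) * r := by ring
    _ ≤ ((2:ℝ)^d * (2:ℝ)^d) * r :=
        mul_le_mul_of_nonneg_right
          (mul_le_mul_of_nonneg_right h2le (by positivity)) hrpos.le
  calc ∑' ℓ : ℕ, x ℓ ≤ A * 1 + B * k := hsum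
  _ = A + B * k := by ring
  _ ≤ (2:ℝ)^(d:ℝ) * r + (2:ℝ)^(d:ℝ) * r := add_le_add hA_le hB_le
  _ ≤ (4:ℝ) ^ d * r := hfin
end

section
/- Fix an integer d ≥ 1 and reals γ > 0, K ≥ φ > 0, and reals α and β with 0 ≤ α < 1, β ≥ 0, and α·γ − β ≥ 1. Then every feasible level-count vector x : ℕ → ℝ (with sample budget k = K) satisfies φ^{1−α}·∑_{ℓ∈ℕ} x_ℓ·2^{ℓ(β+γ(1−α))} ≤ 4^{d+β+γ(1−α)}·φ^{−(dα+β)/(d+γ)}·K^{(d+(1−α)γ+β)/(d+γ)}. -/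
private lemma gm2_aux {X Y θ : ℝ} (hX : 0 ≤ X) (hY : 0 ≤ Y) (h0 : 0 ≤ θ) (h1 : θ ≤ 1) :
    X ^ θ * Y ^ (1 - θ) ≤ X + Y := by
  have := Real.geom_mean_le_arith_mean2_weighted (w₁ := θ) (w₂ := 1 - θ) h0
    (by linarith) hX hY (by ring)
  nlinarith [mul_nonneg h0 hX, mul_nonneg (by linarith : (0:ℝ) ≤ 1-θ) hY]

private lemma Fpow_aux (φ K : ℝ) (hφ : 0 < φ) (hK : 0 < K) (e f g t : ℝ) :
    ((2:ℝ) ^ e * φ ^ f * K ^ g) ^ t = (2:ℝ) ^ (e*t) * φ ^ (f*t) * K ^ (g*t) := by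
  rw [Real.mul_rpow (by positivity) (by positivity),
      Real.mul_rpow (by positivity) (by positivity),
      ← Real.rpow_mul (by norm_num), ← Real.rpow_mul hφ.le, ← Real.rpow_mul hK.le]

/-- LP form of the first adversarial count-sum bound: for `0 ≤ α < 1`, `β ≥ 0` with
`αγ - β ≥ 1`, every feasible level-count vector satisfies
`φ^{1-α} ∑ x_ℓ 2^{ℓ(β+γ(1-α))} ≤ 4^{d+β+γ(1-α)} φ^{-(dα+β)/(d+γ)} K^{(d+(1-α)γ+β)/(d+γ)}`. -/
theorem stmt_7 (d : ℕ) (hd : 1 ≤ d) (γ φ K α β : ℝ) (hγ : 0 < γ) (hφ : 0 < φ)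
    (hKφ : φ ≤ K) (hα0 : 0 ≤ α) (hα1 : α < 1) (hβ : 0 ≤ β) (hcond : 1 ≤ α * γ - β)
    (x : ℕ → ℝ)
    (hxfin : (Function.support x).Finite)
    (hxnn : ∀ ℓ, 0 ≤ x ℓ)
    (hkraft : ∑' ℓ : ℕ, (2 : ℝ) ^ (-((d : ℝ) * (ℓ : ℝ))) * x ℓ ≤ 1)
    (hsample : ∑' ℓ : ℕ,
        φ * (2 : ℝ) ^ (γ * ((ℓ : ℝ) - 1)) * (2 : ℝ) ^ (-(d : ℝ)) * x ℓ ≤ K) :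
    φ ^ (1 - α) * ∑' ℓ : ℕ, x ℓ * (2 : ℝ) ^ ((ℓ : ℝ) * (β + γ * (1 - α)))
      ≤ (4 : ℝ) ^ ((d : ℝ) + β + γ * (1 - α))
          * φ ^ (-((d : ℝ) * α + β) / ((d : ℝ) + γ))
          * K ^ (((d : ℝ) + (1 - α) * γ + β) / ((d : ℝ) + γ)) := by
  have hK : 0 < K := lt_of_lt_of_le hφ hKφ
  have hd1 : (1:ℝ) ≤ (d:ℝ) := by exact_mod_cast hd
  set w : ℝ := β + γ * (1 - α) with hw
  have hw0 : 0 < w := by nlinarith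
  have hT : (0:ℝ) < (d:ℝ) + γ := by linarith
  set θ : ℝ := (γ - w) / ((d:ℝ) + γ) with hθdef
  have hγw : (1:ℝ) ≤ γ - w := by
    have : γ - w = α * γ - β := by rw [hw]; ring
    linarith
  have hθT : θ * ((d:ℝ) + γ) = γ - w := by
    rw [hθdef]; exact div_mul_cancel₀ _ hT.ne'
  have hθ0 : 0 ≤ θ := div_nonneg (by linarith) hT.le
  have hθ1 : θ ≤ 1 := by rw [hθdef, div_le_one hT]; linarith
  have h1θ : 1 - θ = ((d:ℝ) + w) / ((d:ℝ) + γ) := by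
    rw [hθdef]; field_simp; ring
  set C : ℝ := (2:ℝ) ^ ((d:ℝ) + w) * φ ^ (-(((d:ℝ) + w) / ((d:ℝ) + γ))) with hC
  have hCpos : 0 < C := by rw [hC]; positivity
  set c1 : ℝ := C * K ^ (1 - θ) with hc1
  set c2 : ℝ := C * K ^ (-θ) with hc2
  have hc1pos : 0 < c1 := by rw [hc1]; positivity
  have hc2pos : 0 < c2 := by rw [hc2]; positivity
  have hmul : ∀ e1 f1 g1 e2 f2 g2 : ℝ,
      ((2:ℝ)^e1 * φ^f1 * K^g1) * ((2:ℝ)^e2 * φ^f2 * K^g2)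
        = (2:ℝ)^(e1+e2) * φ^(f1+f2) * K^(g1+g2) := by
    intro e1 f1 g1 e2 f2 g2
    rw [Real.rpow_add two_pos, Real.rpow_add hφ, Real.rpow_add hK]; ring
  -- pointwise bound
  have key : ∀ ℓ : ℕ, x ℓ * (2:ℝ) ^ ((ℓ:ℝ) * w)
      ≤ c1 * ((2:ℝ) ^ (-((d:ℝ) * (ℓ:ℝ))) * x ℓ)
        + c2 * (φ * (2:ℝ) ^ (γ * ((ℓ:ℝ) - 1)) * (2:ℝ) ^ (-(d:ℝ)) * x ℓ) := by
    intro ℓ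
    set X : ℝ := c1 * (2:ℝ) ^ (-((d:ℝ) * (ℓ:ℝ))) with hXdef
    set Y : ℝ := c2 * (φ * (2:ℝ) ^ (γ * ((ℓ:ℝ) - 1)) * (2:ℝ) ^ (-(d:ℝ))) with hYdef
    have hXpos : 0 < X := mul_pos hc1pos (by positivity)
    have hYpos : 0 < Y := mul_pos hc2pos (by positivity)
    have hXF : X = (2:ℝ) ^ (((d:ℝ) + w) + -((d:ℝ) * (ℓ:ℝ)))
        * φ ^ (-(((d:ℝ) + w) / ((d:ℝ) + γ))) * K ^ (1 - θ) := by
      rw [Real.rpow_add two_pos, hXdef, hc1, hC]; ring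
    have hYF : Y = (2:ℝ) ^ (((d:ℝ) + w) + (γ * ((ℓ:ℝ) - 1) + -(d:ℝ)))
        * φ ^ ((-(((d:ℝ) + w) / ((d:ℝ) + γ))) + 1) * K ^ (-θ) := by
      rw [Real.rpow_add two_pos ((d:ℝ) + w) (γ * ((ℓ:ℝ) - 1) + -(d:ℝ)),
        Real.rpow_add two_pos (γ * ((ℓ:ℝ) - 1)) (-(d:ℝ)), Real.rpow_add hφ, Real.rpow_one,
        hYdef, hc2, hC]; ring
    have hEe : (((d:ℝ) + w) + -((d:ℝ) * (ℓ:ℝ))) * θ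
        + (((d:ℝ) + w) + (γ * ((ℓ:ℝ) - 1) + -(d:ℝ))) * (1 - θ) = (ℓ:ℝ) * w := by
      linear_combination (1 - (ℓ:ℝ)) * hθT
    have hFe : (-(((d:ℝ) + w) / ((d:ℝ) + γ))) * θ
        + ((-(((d:ℝ) + w) / ((d:ℝ) + γ))) + 1) * (1 - θ) = 0 := by
      linear_combination h1θ
    have hGe : (1 - θ) * θ + (-θ) * (1 - θ) = 0 := by ring
    have hId : X ^ θ * Y ^ (1 - θ) = (2:ℝ) ^ ((ℓ:ℝ) * w) := by
      rw [hXF, hYF, Fpow_aux φ K hφ hK, Fpow_aux φ K hφ hK, hmul, hEe, hFe, hGe,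
        Real.rpow_zero, Real.rpow_zero, mul_one, mul_one]
    calc x ℓ * (2:ℝ) ^ ((ℓ:ℝ) * w) = x ℓ * (X ^ θ * Y ^ (1 - θ)) := by rw [hId]
      _ ≤ x ℓ * (X + Y) :=
          mul_le_mul_of_nonneg_left (gm2_aux hXpos.le hYpos.le hθ0 hθ1) (hxnn ℓ)
      _ = c1 * ((2:ℝ) ^ (-((d:ℝ) * (ℓ:ℝ))) * x ℓ)
          + c2 * (φ * (2:ℝ) ^ (γ * ((ℓ:ℝ) - 1)) * (2:ℝ) ^ (-(d:ℝ)) * x ℓ) := by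
          rw [hXdef, hYdef]; ring
  -- summability
  have hsummable : ∀ f : ℕ → ℝ, (∀ ℓ, x ℓ = 0 → f ℓ = 0) → Summable f := by
    intro f hf
    apply summable_of_ne_finset_zero (s := hxfin.toFinset)
    intro ℓ hℓ
    apply hf
    by_contra h
    exact hℓ (hxfin.mem_toFinset.mpr h)
  have hsum1 : Summable (fun ℓ : ℕ => (2:ℝ) ^ (-((d:ℝ) * (ℓ:ℝ))) * x ℓ) :=
    hsummable _ (fun ℓ h => by rw [h, mul_zero])
  have hsum2 : Summable (fun ℓ : ℕ =>
      φ * (2:ℝ) ^ (γ * ((ℓ:ℝ) - 1)) * (2:ℝ) ^ (-(d:ℝ)) * x ℓ) :=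
    hsummable _ (fun ℓ h => by rw [h, mul_zero])
  have hsumf : Summable (fun ℓ : ℕ => x ℓ * (2:ℝ) ^ ((ℓ:ℝ) * w)) :=
    hsummable _ (fun ℓ h => by rw [h, zero_mul])
  have hsumg : Summable (fun ℓ : ℕ => c1 * ((2:ℝ) ^ (-((d:ℝ) * (ℓ:ℝ))) * x ℓ)
      + c2 * (φ * (2:ℝ) ^ (γ * ((ℓ:ℝ) - 1)) * (2:ℝ) ^ (-(d:ℝ)) * x ℓ)) :=
    (hsum1.mul_left c1).add (hsum2.mul_left c2)
  -- sum bound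
  have hKK : K ^ (-θ) * K = K ^ (1 - θ) := by
    rw [show (1:ℝ) - θ = -θ + 1 by ring, Real.rpow_add hK, Real.rpow_one]
  have hS : (∑' ℓ : ℕ, x ℓ * (2:ℝ) ^ ((ℓ:ℝ) * w)) ≤ 2 * C * K ^ (1 - θ) := by
    calc (∑' ℓ : ℕ, x ℓ * (2:ℝ) ^ ((ℓ:ℝ) * w))
        ≤ ∑' ℓ : ℕ, (c1 * ((2:ℝ) ^ (-((d:ℝ) * (ℓ:ℝ))) * x ℓ)
            + c2 * (φ * (2:ℝ) ^ (γ * ((ℓ:ℝ) - 1)) * (2:ℝ) ^ (-(d:ℝ)) * x ℓ)) :=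
          Summable.tsum_le_tsum key hsumf hsumg
      _ = c1 * (∑' ℓ : ℕ, (2:ℝ) ^ (-((d:ℝ) * (ℓ:ℝ))) * x ℓ)
          + c2 * (∑' ℓ : ℕ, φ * (2:ℝ) ^ (γ * ((ℓ:ℝ) - 1)) * (2:ℝ) ^ (-(d:ℝ)) * x ℓ) := by
          rw [Summable.tsum_add (hsum1.mul_left c1) (hsum2.mul_left c2), tsum_mul_left, tsum_mul_left]
      _ ≤ c1 * 1 + c2 * K :=
          add_le_add (mul_le_mul_of_nonneg_left hkraft hc1pos.le)
            (mul_le_mul_of_nonneg_left hsample hc2pos.le)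
      _ = 2 * C * K ^ (1 - θ) := by
          rw [hc1, hc2, mul_one, mul_assoc C (K ^ (-θ)) K, hKK]; ring
  -- final scalar bound
  have hφexp : φ ^ (1 - α) * φ ^ (-(((d:ℝ) + w) / ((d:ℝ) + γ)))
      = φ ^ (-((d:ℝ) * α + β) / ((d:ℝ) + γ)) := by
    rw [← Real.rpow_add hφ]
    congr 1
    rw [hw]; field_simp; ring
  have hKexp : (1:ℝ) - θ = ((d:ℝ) + (1 - α) * γ + β) / ((d:ℝ) + γ) := by
    rw [h1θ, hw]; ring
  have h22 : (2:ℝ) ^ (2:ℝ) = 4 := by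
    have := Real.rpow_natCast (2:ℝ) 2
    norm_num at this
    linarith [this]
  have h4 : 2 * (2:ℝ) ^ ((d:ℝ) + w) ≤ (4:ℝ) ^ ((d:ℝ) + β + γ * (1 - α)) := by
    have h42 : (4:ℝ) ^ ((d:ℝ) + β + γ * (1 - α)) = (2:ℝ) ^ (2 * ((d:ℝ) + w)) := by
      rw [← h22, ← Real.rpow_mul (by norm_num : (0:ℝ) ≤ 2)]
      congr 1
      rw [hw]; ring
    rw [h42, show 2 * (2:ℝ) ^ ((d:ℝ) + w) = (2:ℝ) ^ (1 + ((d:ℝ) + w)) from by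
      rw [Real.rpow_add two_pos 1 ((d:ℝ) + w), Real.rpow_one]]
    apply Real.rpow_le_rpow_of_exponent_le (by norm_num)
    linarith
  calc φ ^ (1 - α) * ∑' ℓ : ℕ, x ℓ * (2:ℝ) ^ ((ℓ:ℝ) * w)
      ≤ φ ^ (1 - α) * (2 * C * K ^ (1 - θ)) :=
        mul_le_mul_of_nonneg_left hS (Real.rpow_pos_of_pos hφ _).le
    _ = (2 * (2:ℝ) ^ ((d:ℝ) + w))
        * (φ ^ (1 - α) * φ ^ (-(((d:ℝ) + w) / ((d:ℝ) + γ)))) * K ^ (1 - θ) := by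
        rw [hC]; ring
    _ = (2 * (2:ℝ) ^ ((d:ℝ) + w)) * φ ^ (-((d:ℝ) * α + β) / ((d:ℝ) + γ))
        * K ^ (((d:ℝ) + (1 - α) * γ + β) / ((d:ℝ) + γ)) := by rw [hφexp, hKexp]
    _ ≤ (4:ℝ) ^ ((d:ℝ) + β + γ * (1 - α)) * φ ^ (-((d:ℝ) * α + β) / ((d:ℝ) + γ))
        * K ^ (((d:ℝ) + (1 - α) * γ + β) / ((d:ℝ) + γ)) := by
        gcongr
end

section
/- Fix integers d ≥ 1 and d_S ≥ 0 and reals γ ≥ d_S + 1 and k ≥ φ > 0. Then every feasible level-count vector x : ℕ → ℝ satisfies ∑_{ℓ∈ℕ} 2^{d_S·ℓ}·x_ℓ ≤ 4^{d+d_S}·(k/φ)^{(d+d_S)/(d+γ)}. -/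
/-- LP form of the storage-complexity bound: with penalty `2^{d_S ℓ}` and `γ ≥ d_S + 1`,
every feasible level-count vector satisfies `∑ 2^{d_S ℓ} x_ℓ ≤ 4^{d+d_S} (k/φ)^{(d+d_S)/(d+γ)}`. -/
theorem stmt_10 (d dS : ℕ) (hd : 1 ≤ d) (γ φ k : ℝ) (hγ : (dS : ℝ) + 1 ≤ γ)
    (hφ : 0 < φ) (hkφ : φ ≤ k)
    (x : ℕ → ℝ)
    (hxfin : (Function.support x).Finite)
    (hxnn : ∀ ℓ, 0 ≤ x ℓ)
    (hkraft : ∑' ℓ : ℕ, (2 : ℝ) ^ (-((d : ℝ) * (ℓ : ℝ))) * x ℓ ≤ 1)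
    (hsample : ∑' ℓ : ℕ,
        φ * (2 : ℝ) ^ (γ * ((ℓ : ℝ) - 1)) * (2 : ℝ) ^ (-(d : ℝ)) * x ℓ ≤ k) :
    ∑' ℓ : ℕ, (2 : ℝ) ^ (dS * ℓ) * x ℓ
      ≤ (4 : ℝ) ^ (d + dS) * (k / φ) ^ (((d : ℝ) + (dS : ℝ)) / ((d : ℝ) + γ)) := by
  classical
  set A : ℝ := (d : ℝ) with hAdef
  set s : ℝ := (dS : ℝ) with hsdef
  have hA1 : (1 : ℝ) ≤ A := by rw [hAdef]; exact_mod_cast hd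
  have hs0 : (0 : ℝ) ≤ s := Nat.cast_nonneg dS
  have hγ0 : (0 : ℝ) < γ := by linarith
  have hAG : (0 : ℝ) < A + γ := by linarith
  have hk0 : (0 : ℝ) < k := lt_of_lt_of_le hφ hkφ
  have hq0 : (0 : ℝ) < k / φ := div_pos hk0 hφ
  have hq1 : (1 : ℝ) ≤ k / φ := (one_le_div hφ).mpr hkφ
  set r : ℝ := (k / φ) ^ ((1 : ℝ) / (A + γ)) with hrdef
  have hr0 : (0 : ℝ) < r := Real.rpow_pos_of_pos hq0 _
  have hr1 : (1 : ℝ) ≤ r := Real.one_le_rpow hq1 (by positivity)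
  have hrq : r ^ (A + γ) = k / φ := by
    rw [hrdef, ← Real.rpow_mul hq0.le, one_div, inv_mul_cancel₀ hAG.ne', Real.rpow_one]
  set L : ℕ := ⌈Real.logb 2 r⌉₊ with hLdef
  have hlogb0 : 0 ≤ Real.logb 2 r := Real.logb_nonneg one_lt_two hr1
  have hrlog : (2 : ℝ) ^ (Real.logb 2 r) = r := Real.rpow_logb two_pos (by norm_num) hr0
  have hL1 : r ≤ (2 : ℝ) ^ (L : ℝ) := by
    rw [← hrlog]
    exact Real.rpow_le_rpow_of_exponent_le one_le_two (Nat.le_ceil _)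
  have hL2 : (2 : ℝ) ^ (L : ℝ) ≤ 2 * r := by
    have h1 : (L : ℝ) ≤ Real.logb 2 r + 1 := (Nat.ceil_lt_add_one hlogb0).le
    calc (2 : ℝ) ^ (L : ℝ) ≤ 2 ^ (Real.logb 2 r + 1) :=
          Real.rpow_le_rpow_of_exponent_le one_le_two h1
      _ = 2 * r := by rw [Real.rpow_add two_pos, hrlog, Real.rpow_one]; ring
  set C : ℝ := (2 : ℝ) ^ (A + s) * r ^ (A + s) / k with hCdef
  have hC0 : 0 ≤ C := by positivity
  -- pointwise bound
  have key : ∀ ℓ : ℕ, (2 : ℝ) ^ (dS * ℓ) * x ℓ ≤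
      (2 : ℝ) ^ ((A + s) * (L : ℝ)) * ((2 : ℝ) ^ (-(A * (ℓ : ℝ))) * x ℓ) +
      C * (φ * (2 : ℝ) ^ (γ * ((ℓ : ℝ) - 1)) * (2 : ℝ) ^ (-A) * x ℓ) := by
    intro ℓ
    have hpow : (2 : ℝ) ^ (dS * ℓ) = (2 : ℝ) ^ (s * (ℓ : ℝ)) := by
      rw [← Real.rpow_natCast 2 (dS * ℓ)]
      push_cast
      rfl
    rw [hpow]
    rcases le_or_gt ℓ L with hle | hgt
    · have h2 : 0 ≤ C * (φ * (2 : ℝ) ^ (γ * ((ℓ : ℝ) - 1)) * (2 : ℝ) ^ (-A) * x ℓ) := by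
        have := hxnn ℓ; positivity
      have h1 : (2 : ℝ) ^ (s * (ℓ : ℝ)) * x ℓ ≤
          (2 : ℝ) ^ ((A + s) * (L : ℝ)) * ((2 : ℝ) ^ (-(A * (ℓ : ℝ))) * x ℓ) := by
        rw [← mul_assoc, ← Real.rpow_add two_pos]
        apply mul_le_mul_of_nonneg_right _ (hxnn ℓ)
        apply Real.rpow_le_rpow_of_exponent_le one_le_two
        have hcast : (ℓ : ℝ) ≤ (L : ℝ) := by exact_mod_cast hle
        nlinarith
      linarith
    · have hcast : (L : ℝ) ≤ (ℓ : ℝ) - 1 := by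
        have : (L : ℝ) + 1 ≤ (ℓ : ℝ) := by exact_mod_cast hgt
        linarith
      have h1 : 0 ≤ (2 : ℝ) ^ ((A + s) * (L : ℝ)) * ((2 : ℝ) ^ (-(A * (ℓ : ℝ))) * x ℓ) := by
        have := hxnn ℓ; positivity
      have hrℓ : r ≤ (2 : ℝ) ^ ((ℓ : ℝ) - 1) :=
        le_trans hL1 (Real.rpow_le_rpow_of_exponent_le one_le_two hcast)
      have hgs : (0 : ℝ) ≤ γ - s := by linarith
      have hmain : r ^ (γ - s) ≤ (2 : ℝ) ^ (((ℓ : ℝ) - 1) * (γ - s)) := by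
        calc r ^ (γ - s) ≤ ((2 : ℝ) ^ ((ℓ : ℝ) - 1)) ^ (γ - s) :=
              Real.rpow_le_rpow hr0.le hrℓ hgs
          _ = (2 : ℝ) ^ (((ℓ : ℝ) - 1) * (γ - s)) := by
              rw [← Real.rpow_mul (by norm_num : (0:ℝ) ≤ 2)]
      have h2 : (2 : ℝ) ^ (s * (ℓ : ℝ)) * x ℓ ≤
          C * (φ * (2 : ℝ) ^ (γ * ((ℓ : ℝ) - 1)) * (2 : ℝ) ^ (-A) * x ℓ) := by
        have hfactor : (2 : ℝ) ^ (s * (ℓ : ℝ)) ≤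
            C * (φ * (2 : ℝ) ^ (γ * ((ℓ : ℝ) - 1)) * (2 : ℝ) ^ (-A)) := by
          rw [hCdef, div_mul_eq_mul_div, le_div_iff₀ hk0]
          have hk : k = φ * r ^ (A + γ) := by
            rw [hrq]; field_simp
          rw [hk]
          have E1 : (2 : ℝ) ^ (s * (ℓ : ℝ)) * (φ * r ^ (A + γ)) =
              r ^ (γ - s) * ((2 : ℝ) ^ (s * (ℓ : ℝ)) * φ * r ^ (A + s)) := by
            rw [show A + γ = (γ - s) + (A + s) by ring, Real.rpow_add hr0]; ring
          have E2 : (2 : ℝ) ^ (A + s) * r ^ (A + s) *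
              (φ * (2 : ℝ) ^ (γ * ((ℓ : ℝ) - 1)) * (2 : ℝ) ^ (-A)) =
              (2 : ℝ) ^ (((ℓ : ℝ) - 1) * (γ - s)) *
                ((2 : ℝ) ^ (s * (ℓ : ℝ)) * φ * r ^ (A + s)) := by
            rw [show (2 : ℝ) ^ (A + s) * r ^ (A + s) *
                (φ * (2 : ℝ) ^ (γ * ((ℓ : ℝ) - 1)) * (2 : ℝ) ^ (-A)) =
                ((2 : ℝ) ^ (A + s) * (2 : ℝ) ^ (γ * ((ℓ : ℝ) - 1)) * (2 : ℝ) ^ (-A)) *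
                  (φ * r ^ (A + s)) by ring,
              show (2 : ℝ) ^ (((ℓ : ℝ) - 1) * (γ - s)) *
                ((2 : ℝ) ^ (s * (ℓ : ℝ)) * φ * r ^ (A + s)) =
                ((2 : ℝ) ^ (((ℓ : ℝ) - 1) * (γ - s)) * (2 : ℝ) ^ (s * (ℓ : ℝ))) *
                  (φ * r ^ (A + s)) by ring,
              ← Real.rpow_add two_pos, ← Real.rpow_add two_pos, ← Real.rpow_add two_pos]
            congr 1
            ring
          rw [E1, E2]
          exact mul_le_mul_of_nonneg_right hmain (by positivity)
        simpa [mul_assoc] using mul_le_mul_of_nonneg_right hfactor (hxnn ℓ)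
      linarith
  -- summability
  set S := hxfin.toFinset with hSdef
  have hxS : ∀ ℓ ∉ S, x ℓ = 0 := by
    intro ℓ h
    by_contra hne
    exact h (hxfin.mem_toFinset.mpr hne)
  have sum0 : Summable (fun ℓ : ℕ => (2 : ℝ) ^ (dS * ℓ) * x ℓ) :=
    summable_of_ne_finset_zero (s := S) (fun ℓ h => by rw [hxS ℓ h, mul_zero])
  have sum1 : Summable (fun ℓ : ℕ => (2 : ℝ) ^ (-(A * (ℓ : ℝ))) * x ℓ) :=
    summable_of_ne_finset_zero (s := S) (fun ℓ h => by rw [hxS ℓ h, mul_zero])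
  have sum2 : Summable (fun ℓ : ℕ =>
      φ * (2 : ℝ) ^ (γ * ((ℓ : ℝ) - 1)) * (2 : ℝ) ^ (-A) * x ℓ) :=
    summable_of_ne_finset_zero (s := S) (fun ℓ h => by rw [hxS ℓ h, mul_zero])
  have sum1' := sum1.mul_left ((2 : ℝ) ^ ((A + s) * (L : ℝ)))
  have sum2' := sum2.mul_left C
  have step1 : ∑' ℓ : ℕ, (2 : ℝ) ^ (dS * ℓ) * x ℓ ≤
      (2 : ℝ) ^ ((A + s) * (L : ℝ)) *
        (∑' ℓ : ℕ, (2 : ℝ) ^ (-(A * (ℓ : ℝ))) * x ℓ) +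
      C * (∑' ℓ : ℕ, φ * (2 : ℝ) ^ (γ * ((ℓ : ℝ) - 1)) * (2 : ℝ) ^ (-A) * x ℓ) := by
    rw [← tsum_mul_left, ← tsum_mul_left, ← Summable.tsum_add sum1' sum2']
    exact Summable.tsum_le_tsum key sum0 (sum1'.add sum2')
  have hkraft' : (0 : ℝ) ≤ ∑' ℓ : ℕ, (2 : ℝ) ^ (-(A * (ℓ : ℝ))) * x ℓ :=
    tsum_nonneg (fun ℓ => by have := hxnn ℓ; positivity)
  have step2 : ∑' ℓ : ℕ, (2 : ℝ) ^ (dS * ℓ) * x ℓ ≤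
      (2 : ℝ) ^ ((A + s) * (L : ℝ)) + C * k := by
    have h1 : (2 : ℝ) ^ ((A + s) * (L : ℝ)) *
        (∑' ℓ : ℕ, (2 : ℝ) ^ (-(A * (ℓ : ℝ))) * x ℓ) ≤ (2 : ℝ) ^ ((A + s) * (L : ℝ)) * 1 :=
      mul_le_mul_of_nonneg_left hkraft (by positivity)
    have h2 : C * (∑' ℓ : ℕ, φ * (2 : ℝ) ^ (γ * ((ℓ : ℝ) - 1)) * (2 : ℝ) ^ (-A) * x ℓ) ≤
        C * k := mul_le_mul_of_nonneg_left hsample hC0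
    calc ∑' ℓ : ℕ, (2 : ℝ) ^ (dS * ℓ) * x ℓ ≤ _ := step1
      _ ≤ (2 : ℝ) ^ ((A + s) * (L : ℝ)) * 1 + C * k := by linarith
      _ = (2 : ℝ) ^ ((A + s) * (L : ℝ)) + C * k := by ring
  -- bound the two constants
  have hAs0 : (0 : ℝ) ≤ A + s := by linarith
  have hb1 : (2 : ℝ) ^ ((A + s) * (L : ℝ)) ≤ (2 : ℝ) ^ (A + s) * r ^ (A + s) := by
    have : (2 : ℝ) ^ ((A + s) * (L : ℝ)) = ((2 : ℝ) ^ (L : ℝ)) ^ (A + s) := by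
      rw [← Real.rpow_mul (by norm_num : (0:ℝ) ≤ 2), mul_comm]
    rw [this]
    calc ((2 : ℝ) ^ (L : ℝ)) ^ (A + s) ≤ (2 * r) ^ (A + s) :=
          Real.rpow_le_rpow (by positivity) hL2 hAs0
      _ = (2 : ℝ) ^ (A + s) * r ^ (A + s) := Real.mul_rpow (by norm_num) hr0.le
  have hb2 : C * k = (2 : ℝ) ^ (A + s) * r ^ (A + s) := by
    rw [hCdef]; field_simp
  have hrfinal : r ^ (A + s) = (k / φ) ^ ((A + s) / (A + γ)) := by
    rw [hrdef, ← Real.rpow_mul hq0.le]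
    congr 1
    field_simp
  have hnat : (2 : ℝ) ^ (A + s) = (2 : ℝ) ^ (d + dS) := by
    rw [← Real.rpow_natCast 2 (d + dS)]
    push_cast
    rfl
  have hfour : 2 * (2 : ℝ) ^ (d + dS) ≤ (4 : ℝ) ^ (d + dS) := by
    have h1 : 1 ≤ d + dS := le_trans hd (Nat.le_add_right d dS)
    rw [show (4 : ℝ) = 2 ^ 2 by norm_num, ← pow_mul]
    calc 2 * (2 : ℝ) ^ (d + dS) = 2 ^ (d + dS + 1) := by rw [pow_succ]; ring
      _ ≤ 2 ^ (2 * (d + dS)) := pow_le_pow_right₀ one_le_two (by omega)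
  calc ∑' ℓ : ℕ, (2 : ℝ) ^ (dS * ℓ) * x ℓ ≤ (2 : ℝ) ^ ((A + s) * (L : ℝ)) + C * k := step2
    _ ≤ (2 : ℝ) ^ (A + s) * r ^ (A + s) + (2 : ℝ) ^ (A + s) * r ^ (A + s) := by
        rw [hb2]; linarith
    _ = 2 * (2 : ℝ) ^ (d + dS) * r ^ (A + s) := by rw [← hnat]; ring
    _ ≤ (4 : ℝ) ^ (d + dS) * r ^ (A + s) :=
        mul_le_mul_of_nonneg_right hfour (by positivity)
    _ = (4 : ℝ) ^ (d + dS) * (k / φ) ^ (((d : ℝ) + (dS : ℝ)) / ((d : ℝ) + γ)) := by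
        rw [hrfinal]
end
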